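/- The antipode S of H_1^i satisfies S⁴ = id but S² ≠ id; its eigenvalues are 1, i, -i, with the eigenspace for 1 spanned by {e_0, e_1, e_0EF, e_1EF}, for i by {e_0E - i·e_1E, e_0F + i·e_1F}, and for -i by {e_0E + i·e_1E, e_0F - i·e_1F}. -/

import Mathlib

/-!
The antipode fixes `e₀, e₁, e₀EF, e₁EF`; since `E e₀ = e₁E`, `E e₁ = e₀E` (likewise for `F`), it
acts by `S(e₀E) = e₁E`, `S(e₁E) = -e₀E`, `S(e₀F) = -e₁F`, `S(e₁F) = e₀F`, so the listed vectors are
eigenvectors for `1`, `i`, `-i`. Their span contains `e₀x` and `e₁x`, hence `x = (e₀ + e₁)x` and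
`Kx = (e₀ - e₁)x`, for `x ∈ {1, E, F, EF}`; these eight monomials span the algebra. So `S` is
diagonalisable with eigenvalues among the fourth roots of unity `1, i, -i`, whence `S⁴ = id`, and
independence of eigenspaces identifies each eigenspace with the corresponding span. The spans are
nonzero (so `S² ≠ id`), as the representation `K ↦ diag(1, -1)`, `E ↦ E₁₂`, `F ↦ 0` shows.
-/

noncomputable section


namespace Stmt11

def X (n : Fin 3) : FreeAlgebra ℂ (Fin 3) := FreeAlgebra.ι ℂ n

/-- Relations of `H_1^i`: `KE = -EK`, `KF = -FK`, `EF = FE`, `E² = 0`, `F² = 0`, `K² = 1`. -/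
inductive rel : FreeAlgebra ℂ (Fin 3) → FreeAlgebra ℂ (Fin 3) → Prop
  | ke : rel (X 0 * X 1) (-(X 1 * X 0))
  | kf : rel (X 0 * X 2) (-(X 2 * X 0))
  | ef : rel (X 1 * X 2) (X 2 * X 1)
  | e2 : rel (X 1 ^ 2) 0
  | f2 : rel (X 2 ^ 2) 0
  | k2 : rel (X 0 ^ 2) 1

/-- The algebra `H_1^i`. -/
abbrev H1 := RingQuot rel

def K : H1 := RingQuot.mkAlgHom ℂ rel (X 0)
def E : H1 := RingQuot.mkAlgHom ℂ rel (X 1)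
def F : H1 := RingQuot.mkAlgHom ℂ rel (X 2)
def e0 : H1 := (2 : ℂ)⁻¹ • (1 + K)
def e1 : H1 := (2 : ℂ)⁻¹ • (1 - K)

end Stmt11

namespace Module.End

variable {𝕜 V ι : Type*} [Field 𝕜] [AddCommGroup V] [Module 𝕜 V] {f : End 𝕜 V}
  {W : ι → Submodule 𝕜 V} {μ : ι → 𝕜}

theorem eigenspace_le_iSup_of_iSup_eq_top (hW : ∀ i, W i ≤ f.eigenspace (μ i))
    (htop : ⨆ i, W i = ⊤) (ν : 𝕜) : f.eigenspace ν ≤ ⨆ (i) (_ : μ i = ν), W i := by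
  intro v hv
  have hv' : v ∈ (⨆ (i) (_ : μ i = ν), W i) ⊔ ⨆ (i) (_ : μ i ≠ ν), W i := by
    rw [← iSup_split, htop]; trivial
  obtain ⟨w, hw, u, hu, rfl⟩ := Submodule.mem_sup.mp hv'
  have hWν : ⨆ (i) (_ : μ i = ν), W i ≤ f.eigenspace ν := iSup₂_le fun i hi => hi ▸ hW i
  have hWother : ⨆ (i) (_ : μ i ≠ ν), W i ≤ ⨆ (κ) (_ : κ ≠ ν), f.eigenspace κ :=
    iSup₂_le fun i hi => (hW i).trans (le_iSup₂_of_le (μ i) hi le_rfl)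
  have hu_ν : u ∈ f.eigenspace ν := by
    simpa using sub_mem hv (hWν hw)
  have : u = 0 := (f.eigenspaces_iSupIndep ν).le_bot ⟨hu_ν, hWother hu⟩
  simpa [this] using hw

theorem eigenspace_eq_of_iSup_eq_top (hW : ∀ i, W i ≤ f.eigenspace (μ i))
    (htop : ⨆ i, W i = ⊤) (hμ : Function.Injective μ) (i : ι) : f.eigenspace (μ i) = W i := by
  refine le_antisymm ((eigenspace_le_iSup_of_iSup_eq_top hW htop _).trans ?_) (hW i)
  exact iSup₂_le fun j hj => hμ hj ▸ le_rfl

theorem eigenspace_eq_bot_of_iSup_eq_top (hW : ∀ i, W i ≤ f.eigenspace (μ i))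
    (htop : ⨆ i, W i = ⊤) {ν : 𝕜} (hν : ν ∉ Set.range μ) : f.eigenspace ν = ⊥ := by
  refine eq_bot_iff.mpr ((eigenspace_le_iSup_of_iSup_eq_top hW htop _).trans ?_)
  exact iSup₂_le fun i hi => absurd ⟨i, hi⟩ hν

theorem pow_eq_one_of_iSup_eq_top (hW : ∀ i, W i ≤ f.eigenspace (μ i))
    (htop : ⨆ i, W i = ⊤) {n : ℕ} (hμ : ∀ i, μ i ^ n = 1) : f ^ n = 1 := by
  refine LinearMap.eqLocus_eq_top.mp (eq_top_iff.mpr (htop ▸ iSup_le fun i v hv => ?_))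
  rcases eq_or_ne v 0 with rfl | hv0
  · exact zero_mem _
  · have := (show f.HasEigenvector (μ i) v from ⟨hW i hv, hv0⟩).pow_apply n
    simp [this, hμ i]

theorem pow_ne_one_of_hasEigenvalue {ν : 𝕜} {n : ℕ} (h : f.HasEigenvalue ν) (hν : ν ^ n ≠ 1) :
    f ^ n ≠ 1 := by
  intro hf
  obtain ⟨v, hv⟩ := h.exists_hasEigenvector
  have : (ν ^ n - 1) • v = 0 := by
    rw [sub_smul, one_smul, ← hv.pow_apply n, hf, one_apply, sub_self]
  exact (smul_eq_zero.mp this).elim (fun h => hν (sub_eq_zero.mp h)) hv.2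

end Module.End

theorem Submodule.mem_of_add_smul_mem_of_sub_smul_mem {𝕜 V : Type*} [Field 𝕜] [NeZero (2 : 𝕜)]
    [AddCommGroup V] [Module 𝕜 V] {P : Submodule 𝕜 V} {x y : V} {c : 𝕜} (hc : c ≠ 0)
    (hadd : x + c • y ∈ P) (hsub : x - c • y ∈ P) : x ∈ P ∧ y ∈ P := by
  constructor
  · refine (P.smul_mem_iff (two_ne_zero : (2 : 𝕜) ≠ 0)).mp ?_
    convert add_mem hadd hsub using 1
    module
  · refine (P.smul_mem_iff (mul_ne_zero (two_ne_zero : (2 : 𝕜) ≠ 0) hc)).mp ?_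
    convert sub_mem hadd hsub using 1
    module

namespace Stmt11

@[simp] lemma K_mul_K : K * K = 1 := by
  simpa [K, sq] using RingQuot.mkAlgHom_rel ℂ rel.k2
@[simp] lemma E_mul_E : E * E = 0 := by
  simpa [E, sq] using RingQuot.mkAlgHom_rel ℂ rel.e2
@[simp] lemma F_mul_F : F * F = 0 := by
  simpa [F, sq] using RingQuot.mkAlgHom_rel ℂ rel.f2
@[simp] lemma E_mul_K : E * K = -(K * E) := by
  have h : K * E = -(E * K) := by simpa [K, E] using RingQuot.mkAlgHom_rel ℂ rel.ke
  rw [h, neg_neg]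
@[simp] lemma F_mul_K : F * K = -(K * F) := by
  have h : K * F = -(F * K) := by simpa [K, F] using RingQuot.mkAlgHom_rel ℂ rel.kf
  rw [h, neg_neg]
@[simp] lemma F_mul_E : F * E = E * F := by
  simpa [E, F] using (RingQuot.mkAlgHom_rel ℂ rel.ef).symm

/- The negation and the multiplication of `H1` are found through different instance paths
(`FreeAlgebra.instRing` vs. `FreeAlgebra.instSemiring`) that agree only up to unfolding, so
`rw` and `simp` cannot use `neg_mul` and `mul_neg` on `H1` directly. -/
@[simp] lemma neg_mul' (x y : H1) : -x * y = -(x * y) := neg_mul x y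
@[simp] lemma mul_neg' (x y : H1) : x * -y = -(x * y) := mul_neg x y

@[simp] lemma K_mul_K_mul (x : H1) : K * (K * x) = x := by rw [← mul_assoc, K_mul_K, one_mul]
@[simp] lemma E_mul_E_mul (x : H1) : E * (E * x) = 0 := by rw [← mul_assoc, E_mul_E, zero_mul]
@[simp] lemma F_mul_F_mul (x : H1) : F * (F * x) = 0 := by rw [← mul_assoc, F_mul_F, zero_mul]
@[simp] lemma E_mul_K_mul (x : H1) : E * (K * x) = -(K * (E * x)) := by
  rw [← mul_assoc, E_mul_K, neg_mul', mul_assoc]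
@[simp] lemma F_mul_K_mul (x : H1) : F * (K * x) = -(K * (F * x)) := by
  rw [← mul_assoc, F_mul_K, neg_mul', mul_assoc]
@[simp] lemma F_mul_E_mul (x : H1) : F * (E * x) = E * (F * x) := by
  rw [← mul_assoc, F_mul_E, mul_assoc]

def monomials : Set H1 := {1, K, E, K * E, F, K * F, E * F, K * (E * F)}

lemma mem_monomials {x : H1} :
    x ∈ monomials ↔ x = 1 ∨ x = K ∨ x = E ∨ x = K * E ∨ x = F ∨ x = K * F ∨ x = E * F ∨
      x = K * (E * F) := Iff.rfl

lemma mem_span_monomials {x : H1} (hx : x ∈ monomials) : x ∈ Submodule.span ℂ monomials :=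
  Submodule.subset_span hx

lemma generator_mul_mem_span_monomials {g x : H1} (hg : g ∈ ({K, E, F} : Set H1))
    (hx : x ∈ Submodule.span ℂ monomials) : g * x ∈ Submodule.span ℂ monomials := by
  suffices Submodule.span ℂ monomials ≤ (Submodule.span ℂ monomials).comap (LinearMap.mulLeft ℂ g)
    from this hx
  rw [Submodule.span_le]
  rintro m (rfl | rfl | rfl | rfl | rfl | rfl | rfl | rfl) <;>
    rcases hg with rfl | rfl | rfl <;>
    simp [mem_span_monomials, mem_monomials]

lemma span_monomials : Submodule.span ℂ monomials = ⊤ := by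
  refine Submodule.eq_top_iff'.mpr fun x => ?_
  suffices ∀ y ∈ Submodule.span ℂ monomials, x * y ∈ Submodule.span ℂ monomials by
    simpa using this 1 (mem_span_monomials (by simp [mem_monomials]))
  obtain ⟨x, rfl⟩ := RingQuot.mkAlgHom_surjective ℂ rel x
  induction x using FreeAlgebra.induction with
  | grade0 r =>
    intro y hy
    simpa [Algebra.algebraMap_eq_smul_one] using Submodule.smul_mem _ r hy
  | grade1 i =>
    intro y hy
    apply generator_mul_mem_span_monomials _ hy
    fin_cases i <;> simp [K, E, F, X]
  | mul a b ha hb => intro y hy; rw [map_mul, mul_assoc]; exact ha _ (hb y hy)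
  | add a b ha hb => intro y hy; rw [map_add, add_mul]; exact add_mem (ha y hy) (hb y hy)

lemma e0_add_e1 : e0 + e1 = 1 := by rw [e0, e1]; module
lemma e0_sub_e1 : e0 - e1 = K := by rw [e0, e1]; module

lemma mem_of_e0_mul_mem_of_e1_mul_mem {P : Submodule ℂ H1} {x : H1} (h0 : e0 * x ∈ P)
    (h1 : e1 * x ∈ P) : x ∈ P ∧ K * x ∈ P := by
  constructor
  · simpa [← add_mul, e0_add_e1] using add_mem h0 h1
  · simpa [← sub_mul, e0_sub_e1] using sub_mem h0 h1

lemma K_mul_e0 : K * e0 = e0 := by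
  rw [e0, mul_smul_comm, mul_add, mul_one, K_mul_K, add_comm]
lemma K_mul_e1 : K * e1 = -e1 := by
  rw [e1, mul_smul_comm, mul_sub, mul_one, K_mul_K, ← neg_sub, smul_neg]
lemma E_mul_e0 : E * e0 = e1 * E := by
  rw [e0, e1, mul_smul_comm, smul_mul_assoc, mul_add, sub_mul, mul_one, one_mul, E_mul_K,
    sub_eq_add_neg]
lemma E_mul_e1 : E * e1 = e0 * E := by
  rw [e0, e1, mul_smul_comm, smul_mul_assoc, mul_sub, add_mul, mul_one, one_mul, E_mul_K,
    sub_neg_eq_add]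
lemma F_mul_e0 : F * e0 = e1 * F := by
  rw [e0, e1, mul_smul_comm, smul_mul_assoc, mul_add, sub_mul, mul_one, one_mul, F_mul_K,
    sub_eq_add_neg]
lemma F_mul_e1 : F * e1 = e0 * F := by
  rw [e0, e1, mul_smul_comm, smul_mul_assoc, mul_sub, add_mul, mul_one, one_mul, F_mul_K,
    sub_neg_eq_add]

structure IsAntipode (S : Module.End ℂ H1) : Prop where
  map_one : S 1 = 1
  map_mul : ∀ x y : H1, S (x * y) = S y * S x
  map_K : S K = K
  map_E : S E = -(K * E)
  map_F : S F = -(F * K)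

namespace IsAntipode

variable {S : Module.End ℂ H1}

lemma map_e0 (hS : IsAntipode S) : S e0 = e0 := by
  rw [e0, map_smul, map_add, hS.map_one, hS.map_K]
lemma map_e1 (hS : IsAntipode S) : S e1 = e1 := by
  rw [e1, map_smul, map_sub, hS.map_one, hS.map_K]

lemma map_e0_mul_E (hS : IsAntipode S) : S (e0 * E) = e1 * E := by
  rw [hS.map_mul, hS.map_E, hS.map_e0, neg_mul', mul_assoc, E_mul_e0, ← mul_assoc, K_mul_e1,
    neg_mul', neg_neg]
lemma map_e1_mul_E (hS : IsAntipode S) : S (e1 * E) = -(e0 * E) := by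
  rw [hS.map_mul, hS.map_E, hS.map_e1, neg_mul', mul_assoc, E_mul_e1, ← mul_assoc, K_mul_e0]
lemma map_e0_mul_F (hS : IsAntipode S) : S (e0 * F) = -(e1 * F) := by
  rw [hS.map_mul, hS.map_F, hS.map_e0, neg_mul', mul_assoc, K_mul_e0, F_mul_e0]
lemma map_e1_mul_F (hS : IsAntipode S) : S (e1 * F) = e0 * F := by
  rw [hS.map_mul, hS.map_F, hS.map_e1, neg_mul', mul_assoc, K_mul_e1, mul_neg', F_mul_e1,
    neg_neg]
lemma map_E_mul_F (hS : IsAntipode S) : S (E * F) = E * F := by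
  rw [hS.map_mul, hS.map_E, hS.map_F]
  simp [mul_assoc]
lemma map_e0_mul_EF (hS : IsAntipode S) : S (e0 * (E * F)) = e0 * (E * F) := by
  rw [hS.map_mul, hS.map_E_mul_F, hS.map_e0, mul_assoc, F_mul_e0, ← mul_assoc, E_mul_e1,
    mul_assoc]
lemma map_e1_mul_EF (hS : IsAntipode S) : S (e1 * (E * F)) = e1 * (E * F) := by
  rw [hS.map_mul, hS.map_E_mul_F, hS.map_e1, mul_assoc, F_mul_e1, ← mul_assoc, E_mul_e0,
    mul_assoc]

end IsAntipode

def ρ : H1 →ₐ[ℂ] Matrix (Fin 2) (Fin 2) ℂ :=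
  RingQuot.liftAlgHom ℂ ⟨FreeAlgebra.lift ℂ ![!![1, 0; 0, -1], !![0, 1; 0, 0], 0], by
    rintro _ _ ⟨⟩ <;> ext i j <;> fin_cases i <;> fin_cases j <;> simp [X, sq, Matrix.mul_apply]⟩

lemma ρ_K : ρ K = !![1, 0; 0, -1] := by simp [ρ, K, X]
lemma ρ_E : ρ E = !![0, 1; 0, 0] := by simp [ρ, E, X]

lemma e0_ne_zero : e0 ≠ 0 := fun h => by
  simpa [e0, ρ_K, Matrix.one_fin_two] using congrArg (fun x => ρ x 0 0) h

lemma e0_mul_E_add_smul_ne_zero (c : ℂ) : e0 * E + c • (e1 * E) ≠ 0 := fun h => by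
  simpa [e0, e1, ρ_K, ρ_E, Matrix.one_fin_two, Matrix.mul_apply] using
    congrArg (fun x => ρ x 0 1) h

open Complex in
def antipodeEigenvalue : Fin 3 → ℂ := ![1, I, -I]

open Complex in
def antipodeEigenvectors : Fin 3 → Set H1 :=
  ![{e0, e1, e0 * (E * F), e1 * (E * F)},
    {e0 * E - I • (e1 * E), e0 * F + I • (e1 * F)},
    {e0 * E + I • (e1 * E), e0 * F - I • (e1 * F)}]

def antipodeEigenspan (i : Fin 3) : Submodule ℂ H1 := Submodule.span ℂ (antipodeEigenvectors i)

lemma antipodeEigenvalue_injective : Function.Injective antipodeEigenvalue := by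
  intro i j h
  fin_cases i <;> fin_cases j <;> first | rfl | norm_num [antipodeEigenvalue, Complex.ext_iff] at h

lemma range_antipodeEigenvalue :
    Set.range antipodeEigenvalue = {1, Complex.I, -Complex.I} := by
  ext μ
  constructor
  · rintro ⟨i, rfl⟩
    fin_cases i <;> simp [antipodeEigenvalue]
  · rintro (rfl | rfl | rfl)
    exacts [⟨0, rfl⟩, ⟨1, rfl⟩, ⟨2, rfl⟩]

lemma antipodeEigenspan_le_eigenspace {S : Module.End ℂ H1} (hS : IsAntipode S) (i : Fin 3) :
    antipodeEigenspan i ≤ S.eigenspace (antipodeEigenvalue i) := by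
  have span_le {μ : ℂ} {s : Set H1} (h : ∀ x ∈ s, S x = μ • x) :
      Submodule.span ℂ s ≤ S.eigenspace μ :=
    Submodule.span_le.mpr fun x hx => Module.End.mem_eigenspace_iff.mpr (h x hx)
  fin_cases i <;> apply span_le <;>
    simp only [Set.mem_insert_iff, Set.mem_singleton_iff, forall_eq_or_imp, forall_eq,
      antipodeEigenvectors, antipodeEigenvalue, Fin.zero_eta, Fin.mk_one, Fin.reduceFinMk,
      Matrix.cons_val_zero, Matrix.cons_val_one, Matrix.cons_val_two, Matrix.head_cons,
      Matrix.tail_cons]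
  · simp [hS.map_e0, hS.map_e1, hS.map_e0_mul_EF, hS.map_e1_mul_EF]
  all_goals
    simp only [map_add, map_sub, map_smul, hS.map_e0_mul_E, hS.map_e1_mul_E, hS.map_e0_mul_F,
      hS.map_e1_mul_F]
    constructor
    · linear_combination (norm := module) Complex.I_mul_I • (e1 * E)
    · linear_combination (norm := module) (-Complex.I_mul_I) • (e1 * F)

lemma iSup_antipodeEigenspan : ⨆ i, antipodeEigenspan i = ⊤ := by
  set P := ⨆ i, antipodeEigenspan i
  have mem (i : Fin 3) {x : H1}
      (hx : x ∈ antipodeEigenvectors i := by simp [antipodeEigenvectors]) : x ∈ P :=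
    Submodule.mem_iSup_of_mem i (Submodule.subset_span hx)
  have h1 : e0 * 1 ∈ P ∧ e1 * 1 ∈ P := by simpa using ⟨mem 0 (x := e0), mem 0 (x := e1)⟩
  have hEF : e0 * (E * F) ∈ P ∧ e1 * (E * F) ∈ P := ⟨mem 0, mem 0⟩
  have hE : e0 * E ∈ P ∧ e1 * E ∈ P :=
    Submodule.mem_of_add_smul_mem_of_sub_smul_mem Complex.I_ne_zero (mem 2) (mem 1)
  have hF : e0 * F ∈ P ∧ e1 * F ∈ P :=
    Submodule.mem_of_add_smul_mem_of_sub_smul_mem Complex.I_ne_zero (mem 1) (mem 2)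
  have split {x : H1} (hx : e0 * x ∈ P ∧ e1 * x ∈ P) : x ∈ P ∧ K * x ∈ P :=
    mem_of_e0_mul_mem_of_e1_mul_mem hx.1 hx.2
  rw [eq_top_iff, ← span_monomials, Submodule.span_le]
  rintro _ (rfl | rfl | rfl | rfl | rfl | rfl | rfl | rfl)
  exacts [(split h1).1, by simpa using (split h1).2, (split hE).1, (split hE).2, (split hF).1,
    (split hF).2, (split hEF).1, (split hEF).2]

lemma antipodeEigenspan_ne_bot (i : Fin 3) : antipodeEigenspan i ≠ ⊥ := by
  rw [Submodule.ne_bot_iff]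
  fin_cases i
  · exact ⟨e0, Submodule.subset_span (by simp [antipodeEigenvectors]), e0_ne_zero⟩
  · refine ⟨_, Submodule.subset_span (Set.mem_insert _ _), ?_⟩
    convert e0_mul_E_add_smul_ne_zero (-Complex.I) using 1
    module
  · exact ⟨_, Submodule.subset_span (Set.mem_insert _ _), e0_mul_E_add_smul_ne_zero Complex.I⟩

/-- The antipode `S` of `H_1^i` satisfies `S⁴ = id` but `S² ≠ id`; its eigenvalues are
exactly `1, i, -i`, with eigenspaces spanned by `{e₀, e₁, e₀EF, e₁EF}`,
`{e₀E - i·e₁E, e₀F + i·e₁F}` and `{e₀E + i·e₁E, e₀F - i·e₁F}` respectively. -/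
theorem antipode_order_and_eigenspaces (S : Module.End ℂ H1) (hS1 : S 1 = 1)
    (hSmul : ∀ x y : H1, S (x * y) = S y * S x)
    (hSK : S K = K) (hSE : S E = -(K * E)) (hSF : S F = -(F * K)) :
    S ∘ₗ S ∘ₗ S ∘ₗ S = LinearMap.id ∧ S ∘ₗ S ≠ LinearMap.id ∧
    (∀ μ : ℂ, Module.End.HasEigenvalue S μ ↔ μ ∈ ({1, Complex.I, -Complex.I} : Set ℂ)) ∧
    Module.End.eigenspace S 1 =
      Submodule.span ℂ ({e0, e1, e0 * (E * F), e1 * (E * F)} : Set H1) ∧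
    Module.End.eigenspace S Complex.I =
      Submodule.span ℂ
        ({e0 * E - Complex.I • (e1 * E), e0 * F + Complex.I • (e1 * F)} : Set H1) ∧
    Module.End.eigenspace S (-Complex.I) =
      Submodule.span ℂ
        ({e0 * E + Complex.I • (e1 * E), e0 * F - Complex.I • (e1 * F)} : Set H1) := by
  have hW := antipodeEigenspan_le_eigenspace ⟨hS1, hSmul, hSK, hSE, hSF⟩
  have heig := Module.End.eigenspace_eq_of_iSup_eq_top hW iSup_antipodeEigenspan
    antipodeEigenvalue_injective
  have hasEigenvalue (i : Fin 3) : S.HasEigenvalue (antipodeEigenvalue i) := by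
    rw [Module.End.hasEigenvalue_iff, heig i]
    exact antipodeEigenspan_ne_bot i
  refine ⟨?_, ?_, fun μ => ?_, heig 0, heig 1, heig 2⟩
  · have : S ^ 4 = 1 := Module.End.pow_eq_one_of_iSup_eq_top hW iSup_antipodeEigenspan
      fun i => by fin_cases i <;> norm_num [antipodeEigenvalue]
    exact this
  · have : S ^ 2 ≠ 1 :=
      Module.End.pow_ne_one_of_hasEigenvalue (hasEigenvalue 1) (by norm_num [antipodeEigenvalue])
    exact this
  · rw [← range_antipodeEigenvalue]
    refine ⟨fun h => by_contra fun hμ => h ?_, fun ⟨i, hi⟩ => hi ▸ hasEigenvalue i⟩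
    exact Module.End.eigenspace_eq_bot_of_iSup_eq_top hW iSup_antipodeEigenspan hμ

end Stmt11
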